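/- Let T : X → Y be a bounded bijective operator between Banach spaces, S_X(t) and S_Y(t) strongly continuous semigroups on X, Y with generators A_X, A_Y. Suppose for each t > 0 there exists T_t ∈ L(X; Y) with S_Y(t) T = T_t S_X(t), and t⁻¹(T_t − T) converges strongly as t → 0⁺ to a bounded operator B : X → Y. Then T maps the domain of A_X bijectively onto the domain of A_Y, and for all ξ ∈ dom(A_Y), A_X T⁻¹ ξ = T⁻¹(A_Y ξ − B T⁻¹ ξ); consequently ‖A_X T⁻¹ ξ‖_X ≤ ‖T⁻¹‖ (‖A_Y ξ‖_Y + ‖B‖ ‖T⁻¹ ξ‖_X). -/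

import Mathlib

/-!
Write `D_t = t⁻¹ (T_t − T)`. The intertwining relation gives, for `t > 0`,
`t⁻¹ (S_Y(t) T x − T x) = D_t (S_X(t) x) + T (t⁻¹ (S_X(t) x − x))`.
By the uniform boundedness principle the family `D_t` is equibounded along any sequence
`t_n → 0⁺`, so `D_t (S_X(t) x) → B x`. Hence the difference quotient of `S_Y` at `T x`
converges iff that of `S_X` at `x` does, with limits related by `η = B x + T ζ`; applying `T⁻¹`
gives the formula for `A_X T⁻¹ ξ` and the norm estimate.
-/

open Filter Topology

namespace ContinuousLinearMap

variable {𝕜 E F : Type*} [NontriviallyNormedField 𝕜]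
  [NormedAddCommGroup E] [NormedSpace 𝕜 E] [CompleteSpace E]
  [NormedAddCommGroup F] [NormedSpace 𝕜 F]

theorem tendsto_seq_apply_of_tendsto_pointwise {g : ℕ → E →L[𝕜] F} {f : E → F}
    (hg : ∀ x, Tendsto (fun n ↦ g n x) atTop (𝓝 (f x)))
    {u : ℕ → E} {x : E} (hu : Tendsto u atTop (𝓝 x)) :
    Tendsto (fun n ↦ g n (u n)) atTop (𝓝 (f x)) := by
  obtain ⟨C, hC⟩ := banach_steinhaus fun y ↦
    ⟨_, fun n ↦ (hg y).norm.bddAbove_range.choose_spec ⟨n, rfl⟩⟩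
  have hsmall : Tendsto (fun n ↦ g n (u n - x)) atTop (𝓝 0) := by
    refine squeeze_zero_norm (a := fun n ↦ C * ‖u n - x‖)
      (fun n ↦ ((g n).le_opNorm _).trans (by gcongr; exact hC n)) ?_
    simpa using (tendsto_sub_nhds_zero_iff.2 hu).norm.const_mul C
  simpa using (hg x).add hsmall

theorem tendsto_apply_of_tendsto_pointwise {ι : Type*} {l : Filter ι} [l.IsCountablyGenerated]
    {g : ι → E →L[𝕜] F} {f : E → F} (hg : ∀ x, Tendsto (fun i ↦ g i x) l (𝓝 (f x)))
    {u : ι → E} {x : E} (hu : Tendsto u l (𝓝 x)) :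
    Tendsto (fun i ↦ g i (u i)) l (𝓝 (f x)) :=
  tendsto_iff_seq_tendsto.2 fun _ hφ ↦
    tendsto_seq_apply_of_tendsto_pointwise (fun y ↦ (hg y).comp hφ) (hu.comp hφ)

end ContinuousLinearMap

section Intertwining

variable {X Y : Type*} [NormedAddCommGroup X] [NormedSpace ℝ X]
  [NormedAddCommGroup Y] [NormedSpace ℝ Y]

theorem smul_sub_apply_eq_of_comp_eq {T R : X →L[ℝ] Y} {S : X →L[ℝ] X} {S' : Y →L[ℝ] Y}
    (h : S'.comp T = R.comp S) (c : ℝ) (x : X) :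
    c • (S' (T x) - T x) = c • (R (S x) - T (S x)) + T (c • (S x - x)) := by
  rw [← S'.comp_apply, h, R.comp_apply, map_smul, map_sub, ← smul_add]
  abel_nf

variable [CompleteSpace X]

theorem tendsto_inv_smul_sub_iff_of_intertwine {T : X →L[ℝ] Y} {Tinv : Y →L[ℝ] X}
    (hTl : ∀ x, Tinv (T x) = x) {SX : ℝ → X →L[ℝ] X} {SY : ℝ → Y →L[ℝ] Y}
    (hSX : ∀ x, Tendsto (fun t ↦ SX t x) (𝓝[>] 0) (𝓝 x)) {Tt : ℝ → X →L[ℝ] Y}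
    (hTt : ∀ t : ℝ, 0 < t → (SY t).comp T = (Tt t).comp (SX t)) {B : X →L[ℝ] Y}
    (hB : ∀ x, Tendsto (fun t : ℝ ↦ t⁻¹ • (Tt t x - T x)) (𝓝[>] 0) (𝓝 (B x))) (x : X) (ζ : X) :
    Tendsto (fun t : ℝ ↦ t⁻¹ • (SX t x - x)) (𝓝[>] 0) (𝓝 ζ) ↔
      Tendsto (fun t : ℝ ↦ t⁻¹ • (SY t (T x) - T x)) (𝓝[>] 0) (𝓝 (B x + T ζ)) := by
  have hR : Tendsto (fun t : ℝ ↦ t⁻¹ • (Tt t (SX t x) - T (SX t x))) (𝓝[>] 0) (𝓝 (B x)) :=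
    ContinuousLinearMap.tendsto_apply_of_tendsto_pointwise (g := fun t ↦ t⁻¹ • (Tt t - T))
      hB (hSX x)
  have hsplit : ∀ᶠ t in 𝓝[>] (0 : ℝ), t⁻¹ • (SY t (T x) - T x) =
      t⁻¹ • (Tt t (SX t x) - T (SX t x)) + T (t⁻¹ • (SX t x - x)) :=
    eventually_mem_nhdsWithin.mono fun t ht ↦ smul_sub_apply_eq_of_comp_eq (hTt t ht) _ x
  constructor
  · intro hζ
    exact (hR.add ((T.continuous.tendsto ζ).comp hζ)).congr' (hsplit.mono fun t ht ↦ ht.symm)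
  · intro hη
    have hlim := (Tinv.continuous.tendsto _).comp (hη.sub hR)
    rw [add_sub_cancel_left, hTl] at hlim
    refine hlim.congr' (hsplit.mono fun t ht ↦ ?_)
    simp only [Function.comp_apply, ht, add_sub_cancel_left, hTl]

end Intertwining

theorem stmt11_general {X Y : Type*} [NormedAddCommGroup X] [NormedSpace ℝ X] [CompleteSpace X]
    [NormedAddCommGroup Y] [NormedSpace ℝ Y]
    (T : X →L[ℝ] Y) (Tinv : Y →L[ℝ] X)
    (hTl : ∀ x, Tinv (T x) = x) (hTr : ∀ y, T (Tinv y) = y)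
    (SX : ℝ → X →L[ℝ] X) (SY : ℝ → Y →L[ℝ] Y)
    (hSX0 : SX 0 = ContinuousLinearMap.id ℝ X)
    (hSXcont : ∀ x : X, ContinuousWithinAt (fun t => SX t x) (Set.Ici (0 : ℝ)) 0)
    (Tt : ℝ → X →L[ℝ] Y)
    (hTt : ∀ t : ℝ, 0 < t → (SY t).comp T = (Tt t).comp (SX t))
    (B : X →L[ℝ] Y)
    (hB : ∀ x : X, Tendsto (fun t : ℝ => t⁻¹ • (Tt t x - T x))
      (nhdsWithin 0 (Set.Ioi 0)) (nhds (B x))) :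
    (∀ x : X,
      (∃ ζ, Tendsto (fun t : ℝ => t⁻¹ • (SX t x - x)) (nhdsWithin 0 (Set.Ioi 0)) (nhds ζ)) ↔
      (∃ η, Tendsto (fun t : ℝ => t⁻¹ • (SY t (T x) - T x)) (nhdsWithin 0 (Set.Ioi 0))
        (nhds η))) ∧
    ∀ ξ η, Tendsto (fun t : ℝ => t⁻¹ • (SY t ξ - ξ)) (nhdsWithin 0 (Set.Ioi 0)) (nhds η) →
      ∃ ζ, Tendsto (fun t : ℝ => t⁻¹ • (SX t (Tinv ξ) - Tinv ξ))
          (nhdsWithin 0 (Set.Ioi 0)) (nhds ζ) ∧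
        ζ = Tinv (η - B (Tinv ξ)) ∧
        ‖ζ‖ ≤ ‖Tinv‖ * (‖η‖ + ‖B‖ * ‖Tinv ξ‖) := by
  have hSX : ∀ x, Tendsto (fun t ↦ SX t x) (𝓝[>] 0) (𝓝 x) := fun x ↦ by
    simpa [ContinuousWithinAt, hSX0] using (hSXcont x).mono Set.Ioi_subset_Ici_self
  have key := tendsto_inv_smul_sub_iff_of_intertwine hTl hSX hTt hB
  have hη_eq : ∀ x η, B x + T (Tinv (η - B x)) = η := fun x η ↦ by
    rw [hTr, add_sub_cancel]
  refine ⟨fun x ↦ ⟨fun ⟨ζ, hζ⟩ ↦ ⟨_, (key x ζ).1 hζ⟩, fun ⟨η, hη⟩ ↦ ?_⟩, fun ξ η hη ↦ ?_⟩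
  · exact ⟨_, (key x _).2 (by rwa [hη_eq])⟩
  · refine ⟨_, (key (Tinv ξ) _).2 (by rwa [hη_eq, hTr]), rfl, ?_⟩
    calc ‖Tinv (η - B (Tinv ξ))‖ ≤ ‖Tinv‖ * ‖η - B (Tinv ξ)‖ := Tinv.le_opNorm _
      _ ≤ ‖Tinv‖ * (‖η‖ + ‖B‖ * ‖Tinv ξ‖) := by
        gcongr
        exact (norm_sub_le _ _).trans (by gcongr; exact B.le_opNorm _)

/-- Banach-space version of "Nirenberg's trick": if `T : X → Y` is bounded and bijective,
`S_X, S_Y` are strongly continuous semigroups intertwined by `S_Y(t) T = T_t S_X(t)` with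
`t⁻¹(T_t − T) → B` strongly, then `T` maps `dom A_X` bijectively onto `dom A_Y`, and
`A_X T⁻¹ ξ = T⁻¹ (A_Y ξ − B T⁻¹ ξ)`, with the consequent norm estimate. -/
theorem stmt11 {X Y : Type*} [NormedAddCommGroup X] [NormedSpace ℝ X] [CompleteSpace X]
    [NormedAddCommGroup Y] [NormedSpace ℝ Y] [CompleteSpace Y]
    (T : X →L[ℝ] Y) (Tinv : Y →L[ℝ] X)
    (hTl : ∀ x, Tinv (T x) = x) (hTr : ∀ y, T (Tinv y) = y)
    (SX : ℝ → X →L[ℝ] X) (SY : ℝ → Y →L[ℝ] Y)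
    (hSX0 : SX 0 = ContinuousLinearMap.id ℝ X)
    (hSXadd : ∀ s t : ℝ, 0 ≤ s → 0 ≤ t → SX (s + t) = (SX s).comp (SX t))
    (hSXcont : ∀ x : X, ContinuousWithinAt (fun t => SX t x) (Set.Ici (0 : ℝ)) 0)
    (hSY0 : SY 0 = ContinuousLinearMap.id ℝ Y)
    (hSYadd : ∀ s t : ℝ, 0 ≤ s → 0 ≤ t → SY (s + t) = (SY s).comp (SY t))
    (hSYcont : ∀ y : Y, ContinuousWithinAt (fun t => SY t y) (Set.Ici (0 : ℝ)) 0)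
    (Tt : ℝ → X →L[ℝ] Y)
    (hTt : ∀ t : ℝ, 0 < t → (SY t).comp T = (Tt t).comp (SX t))
    (B : X →L[ℝ] Y)
    (hB : ∀ x : X, Tendsto (fun t : ℝ => t⁻¹ • (Tt t x - T x))
      (nhdsWithin 0 (Set.Ioi 0)) (nhds (B x))) :
    (∀ x : X,
      (∃ ζ, Tendsto (fun t : ℝ => t⁻¹ • (SX t x - x)) (nhdsWithin 0 (Set.Ioi 0)) (nhds ζ)) ↔
      (∃ η, Tendsto (fun t : ℝ => t⁻¹ • (SY t (T x) - T x)) (nhdsWithin 0 (Set.Ioi 0))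
        (nhds η))) ∧
    ∀ ξ η, Tendsto (fun t : ℝ => t⁻¹ • (SY t ξ - ξ)) (nhdsWithin 0 (Set.Ioi 0)) (nhds η) →
      ∃ ζ, Tendsto (fun t : ℝ => t⁻¹ • (SX t (Tinv ξ) - Tinv ξ))
          (nhdsWithin 0 (Set.Ioi 0)) (nhds ζ) ∧
        ζ = Tinv (η - B (Tinv ξ)) ∧
        ‖ζ‖ ≤ ‖Tinv‖ * (‖η‖ + ‖B‖ * ‖Tinv ξ‖) :=
  stmt11_general T Tinv hTl hTr SX SY hSX0 hSXcont Tt hTt B hB
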